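/- Let (u, φ, ψ, w) be a classical solution of the suspension-bridge Shear beam system in thermoelasticity of type III, let c_p > 0 be a Poincaré constant for (0,L), and define I₁(t) = ∫₀^L ( ρ u_t u + (μ/2) u² ) dx + ∫₀^L ( ρ₁ φ_t φ + (γ/2) φ² ) dx and I₂(t) = ρ₃ ∫₀^L w_t w dx + (κ/2) ∫₀^L w_x² dx + β ∫₀^L φ_x w dx. Then there exist constants N > 0 and ζ₂ > 0, depending only on the constitutive constants, L and c_p, such that the Lyapunov functional L(t) = N E(t) + I₁(t) + I₂(t) satisfies dL(t)/dt ≤ −ζ₂ E(t) for all t > 0. -/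

import Mathlib

/-
Multiplying the four equations by `N u_t + u`, `N φ_t + φ`, `N ψ_t + ψ`, `N w_t + w` and
integrating by parts (the boundary terms vanish by the Dirichlet conditions), the derivative of
`N E + I₁ + I₂` is the integral of a quadratic form in the solution: the damping terms
`μ u_t²`, `γ φ_t²`, `κ w_xt²` enter with the large factor `N`, while `I₁` and `I₂` contribute
`-α u_x² - λ (φ - u)² - K (φ_x + ψ)² - b ψ_x² - δ w_x²` together with the coupling `2 β φ_x w_t`.
Young's inequality with a small `ε`, `φ_x² ≤ 2 (φ_x + ψ)² + 2 ψ²` and the Poincaré inequality for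
`ψ` and `w_t` absorb the indefinite terms once `N` is large, which gives `dL/dt ≤ -E`.
-/

open MeasureTheory Set

noncomputable section

/-- Partial derivative with respect to the time variable (second argument). -/
def pdt (f : ℝ → ℝ → ℝ) (x t : ℝ) : ℝ := deriv (fun s => f x s) t

/-- Partial derivative with respect to the space variable (first argument). -/
def pdx (f : ℝ → ℝ → ℝ) (x t : ℝ) : ℝ := deriv (fun y => f y t) x
/-- A classical solution of the suspension-bridge Shear beam system in
thermoelasticity of type III. -/
structure IsShearSolution (L ρ α lm μ ρ₁ K γ b ρ₃ δ κ β : ℝ)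
    (u φ ψ w : ℝ → ℝ → ℝ) : Prop where
  smooth_u : ContDiff ℝ 3 (fun p : ℝ × ℝ => u p.1 p.2)
  smooth_phi : ContDiff ℝ 3 (fun p : ℝ × ℝ => φ p.1 p.2)
  smooth_psi : ContDiff ℝ 3 (fun p : ℝ × ℝ => ψ p.1 p.2)
  smooth_w : ContDiff ℝ 3 (fun p : ℝ × ℝ => w p.1 p.2)
  eq1 : ∀ x ∈ Ioo (0:ℝ) L, ∀ t : ℝ, 0 < t →
    ρ * pdt (pdt u) x t - α * pdx (pdx u) x t - lm * (φ x t - u x t)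
      + μ * pdt u x t = 0
  eq2 : ∀ x ∈ Ioo (0:ℝ) L, ∀ t : ℝ, 0 < t →
    ρ₁ * pdt (pdt φ) x t - K * pdx (fun y s => pdx φ y s + ψ y s) x t
      + lm * (φ x t - u x t) + γ * pdt φ x t + β * pdx (pdt w) x t = 0
  eq3 : ∀ x ∈ Ioo (0:ℝ) L, ∀ t : ℝ, 0 < t →
    -b * pdx (pdx ψ) x t + K * (pdx φ x t + ψ x t) = 0
  eq4 : ∀ x ∈ Ioo (0:ℝ) L, ∀ t : ℝ, 0 < t →
    ρ₃ * pdt (pdt w) x t - δ * pdx (pdx w) x t + β * pdx (pdt φ) x t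
      - κ * pdx (pdx (pdt w)) x t = 0
  bc : ∀ t : ℝ, 0 ≤ t →
    u 0 t = 0 ∧ u L t = 0 ∧ φ 0 t = 0 ∧ φ L t = 0 ∧
    ψ 0 t = 0 ∧ ψ L t = 0 ∧ w 0 t = 0 ∧ w L t = 0

/-- The energy functional of the system. -/
def energy (L ρ α lm ρ₁ K b ρ₃ δ : ℝ) (u φ ψ w : ℝ → ℝ → ℝ) (t : ℝ) : ℝ :=
  (1/2) * ∫ x in (0:ℝ)..L,
    (ρ * (pdt u x t)^2 + α * (pdx u x t)^2 + lm * (φ x t - u x t)^2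
      + ρ₁ * (pdt φ x t)^2 + K * (pdx φ x t + ψ x t)^2 + b * (pdx ψ x t)^2
      + ρ₃ * (pdt w x t)^2 + δ * (pdx w x t)^2)

/-- The auxiliary functional I₁. -/
def I1 (L ρ μ ρ₁ γ : ℝ) (u φ : ℝ → ℝ → ℝ) (t : ℝ) : ℝ :=
  (∫ x in (0:ℝ)..L, (ρ * pdt u x t * u x t + μ / 2 * (u x t)^2))
    + ∫ x in (0:ℝ)..L, (ρ₁ * pdt φ x t * φ x t + γ / 2 * (φ x t)^2)

/-- The auxiliary functional I₂. -/
def I2 (L ρ₃ κ β : ℝ) (φ w : ℝ → ℝ → ℝ) (t : ℝ) : ℝ :=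
  ρ₃ * (∫ x in (0:ℝ)..L, pdt w x t * w x t)
    + κ / 2 * (∫ x in (0:ℝ)..L, (pdx w x t)^2)
    + β * ∫ x in (0:ℝ)..L, pdx φ x t * w x t

section PartialDerivatives

variable {f : ℝ → ℝ → ℝ} {m n : WithTop ℕ∞}

theorem hasDerivAt_pdt {x t : ℝ} (hf : DifferentiableAt ℝ (fun p : ℝ × ℝ => f p.1 p.2) (x, t)) :
    HasDerivAt (fun s => f x s) (pdt f x t) t :=
  (hf.comp (f := fun s : ℝ => (x, s)) t (by fun_prop)).hasDerivAt

theorem hasDerivAt_pdx {x t : ℝ} (hf : DifferentiableAt ℝ (fun p : ℝ × ℝ => f p.1 p.2) (x, t)) :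
    HasDerivAt (fun y => f y t) (pdx f x t) x :=
  (hf.comp (f := fun y : ℝ => (y, t)) x (by fun_prop)).hasDerivAt

theorem pdt_eq_fderiv {x t : ℝ} (hf : DifferentiableAt ℝ (fun p : ℝ × ℝ => f p.1 p.2) (x, t)) :
    pdt f x t = fderiv ℝ (fun p : ℝ × ℝ => f p.1 p.2) (x, t) (0, 1) :=
  (hf.hasFDerivAt.comp_hasDerivAt (f := fun s : ℝ => (x, s)) t
    ((hasDerivAt_const t x).prodMk (hasDerivAt_id t))).deriv

theorem pdx_eq_fderiv {x t : ℝ} (hf : DifferentiableAt ℝ (fun p : ℝ × ℝ => f p.1 p.2) (x, t)) :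
    pdx f x t = fderiv ℝ (fun p : ℝ × ℝ => f p.1 p.2) (x, t) (1, 0) :=
  (hf.hasFDerivAt.comp_hasDerivAt (f := fun y : ℝ => (y, t)) x
    ((hasDerivAt_id x).prodMk (hasDerivAt_const x t))).deriv

theorem contDiff_pdt (hf : ContDiff ℝ n (fun p : ℝ × ℝ => f p.1 p.2)) (hmn : m + 1 ≤ n) :
    ContDiff ℝ m (fun p : ℝ × ℝ => pdt f p.1 p.2) := by
  have hd := hf.differentiable (by rintro rfl; simp at hmn)
  simp only [pdt_eq_fderiv (hd _)]
  exact (hf.fderiv_right hmn).clm_apply contDiff_const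

theorem contDiff_pdx (hf : ContDiff ℝ n (fun p : ℝ × ℝ => f p.1 p.2)) (hmn : m + 1 ≤ n) :
    ContDiff ℝ m (fun p : ℝ × ℝ => pdx f p.1 p.2) := by
  have hd := hf.differentiable (by rintro rfl; simp at hmn)
  simp only [pdx_eq_fderiv (hd _)]
  exact (hf.fderiv_right hmn).clm_apply contDiff_const

theorem pdt_pdx_comm (hf : ContDiff ℝ 2 (fun p : ℝ × ℝ => f p.1 p.2)) (x t : ℝ) :
    pdt (pdx f) x t = pdx (pdt f) x t := by
  set F := fun p : ℝ × ℝ => f p.1 p.2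
  have hd : Differentiable ℝ F := hf.differentiable (by norm_num)
  have hF' :=
    ((hf.fderiv_right (m := 1) (by norm_num)).differentiable one_ne_zero (x, t)).hasFDerivAt
  have ht : HasDerivAt (fun s => fderiv ℝ F (x, s) (1, 0))
      (fderiv ℝ (fderiv ℝ F) (x, t) (0, 1) (1, 0)) t := by
    simpa [Function.comp_def] using (hF'.clm_apply (hasFDerivAt_const _ _)).comp_hasDerivAt t
      ((hasDerivAt_const t x).prodMk (hasDerivAt_id t))
  have hx : HasDerivAt (fun y => fderiv ℝ F (y, t) (0, 1))
      (fderiv ℝ (fderiv ℝ F) (x, t) (1, 0) (0, 1)) x := by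
    simpa [Function.comp_def] using (hF'.clm_apply (hasFDerivAt_const _ _)).comp_hasDerivAt x
      ((hasDerivAt_id x).prodMk (hasDerivAt_const x t))
  have hpdx : (fun s => pdx f x s) = fun s => fderiv ℝ F (x, s) (1, 0) :=
    funext fun s => pdx_eq_fderiv (hd _)
  have hpdt : (fun y => pdt f y t) = fun y => fderiv ℝ F (y, t) (0, 1) :=
    funext fun y => pdt_eq_fderiv (hd _)
  rw [pdt, pdx, hpdx, hpdt, ht.deriv, hx.deriv, hf.contDiffAt.isSymmSndFDerivAt (by simp)]

theorem hasDerivAt_partials (hf : ContDiff ℝ 2 (fun p : ℝ × ℝ => f p.1 p.2)) (x t : ℝ) :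
    HasDerivAt (fun s => f x s) (pdt f x t) t
      ∧ HasDerivAt (fun s => pdt f x s) (pdt (pdt f) x t) t
      ∧ HasDerivAt (fun s => pdx f x s) (pdx (pdt f) x t) t
      ∧ HasDerivAt (fun y => f y t) (pdx f x t) x
      ∧ HasDerivAt (fun y => pdt f y t) (pdx (pdt f) x t) x
      ∧ HasDerivAt (fun y => pdx f y t) (pdx (pdx f) x t) x := by
  have hd := hf.differentiable two_ne_zero (x, t)
  have hdt := (contDiff_pdt (m := 1) hf (by norm_num)).differentiable one_ne_zero (x, t)
  have hdx := (contDiff_pdx (m := 1) hf (by norm_num)).differentiable one_ne_zero (x, t)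
  exact ⟨hasDerivAt_pdt hd, hasDerivAt_pdt hdt, pdt_pdx_comm hf x t ▸ hasDerivAt_pdt hdx,
    hasDerivAt_pdx hd, hasDerivAt_pdx hdt, hasDerivAt_pdx hdx⟩

theorem hasDerivAt_integral_pdt (hf : ContDiff ℝ 1 (fun p : ℝ × ℝ => f p.1 p.2)) (a b t : ℝ) :
    HasDerivAt (fun s => ∫ x in a..b, f x s) (∫ x in a..b, pdt f x t) t := by
  have hc : Continuous (fun p : ℝ × ℝ => f p.1 p.2) := hf.continuous
  have hpdt : Continuous (fun p : ℝ × ℝ => pdt f p.1 p.2) :=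
    (contDiff_pdt (m := 0) hf (by norm_num)).continuous
  obtain ⟨C, hC⟩ := (isCompact_uIcc.prod (isCompact_closedBall t 1)).exists_bound_of_continuousOn
    hpdt.continuousOn
  refine (intervalIntegral.hasDerivAt_integral_of_dominated_loc_of_deriv_le (bound := fun _ => C)
    (Metric.ball_mem_nhds t one_pos) (.of_forall fun s => (hc.uncurry_right s).aestronglyMeasurable)
    ((hc.uncurry_right t).intervalIntegrable a b) (hpdt.uncurry_right t).aestronglyMeasurable
    (.of_forall fun x hx s hs => hC (x, s) ⟨uIoc_subset_uIcc hx, Metric.ball_subset_closedBall hs⟩)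
    intervalIntegrable_const
    (.of_forall fun x _ s _ => hasDerivAt_pdt (hf.differentiable one_ne_zero _))).2

theorem pdt_eq_zero_of_forall {x t : ℝ} (ht : 0 < t) (h : ∀ s, 0 ≤ s → f x s = 0) :
    pdt f x t = 0 := by
  have he : (fun s => f x s) =ᶠ[nhds t] fun _ => 0 := by
    filter_upwards [lt_mem_nhds ht] with s hs using h s hs.le
  rw [pdt, he.deriv_eq, deriv_const]

end PartialDerivatives

theorem integral_eq_integral_of_hasDerivAt_sub {a b : ℝ} {g R B : ℝ → ℝ} (hab : a ≤ b)
    (hB : ContinuousOn B (Icc a b)) (hderiv : ∀ x ∈ Ioo a b, HasDerivAt B (g x - R x) x)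
    (hg : IntervalIntegrable g volume a b) (hR : IntervalIntegrable R volume a b)
    (hBab : B a = B b) :
    ∫ x in a..b, g x = ∫ x in a..b, R x := by
  have h := intervalIntegral.integral_eq_sub_of_hasDerivAt_of_le hab hB hderiv (hg.sub hR)
  rw [intervalIntegral.integral_sub hg hR, hBab, sub_self] at h
  exact sub_eq_zero.1 h

theorem integral_sq_sub_mul_deriv_sq_nonpos {L c : ℝ}
    (hpoin : ∀ f : ℝ → ℝ, ContDiff ℝ 1 f → f 0 = 0 → f L = 0 →
      (∫ x in (0:ℝ)..L, (f x)^2) ≤ c * ∫ x in (0:ℝ)..L, (deriv f x)^2)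
    {f : ℝ → ℝ} (hf : ContDiff ℝ 1 f) (h0 : f 0 = 0) (hL : f L = 0) :
    ∫ x in (0:ℝ)..L, ((f x)^2 - c * (deriv f x)^2) ≤ 0 := by
  have hf' := hf.continuous_deriv le_rfl
  have hc := hf.continuous
  rw [intervalIntegral.integral_sub ((by fun_prop : Continuous _).intervalIntegrable 0 L)
    ((by fun_prop : Continuous _).intervalIntegrable 0 L), intervalIntegral.integral_const_mul]
  linarith [hpoin f hf h0 hL]

theorem exists_lyapunov_constants {ρ μ ρ₁ γ K b ρ₃ κ β c_p : ℝ} (hμ : 0 < μ) (hγ : 0 < γ)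
    (hK : 0 < K) (hb : 0 < b) (hρ₃ : 0 < ρ₃) (hκ : 0 < κ) (hcp : 0 < c_p) :
    ∃ N, 0 < N ∧ ∃ ε, 0 < ε ∧ ε ≤ K / 4 ∧ ε * c_p ≤ b / 4 ∧ 3 / 2 * ρ ≤ N * μ
      ∧ 3 / 2 * ρ₁ ≤ N * γ ∧ c_p * (3 / 2 * ρ₃ + β ^ 2 / ε) ≤ N * κ := by
  set ε := min (K / 4) (b / (4 * c_p))
  have hε : 0 < ε := by positivity
  set N := max (max (3 / 2 * ρ / μ) (3 / 2 * ρ₁ / γ)) (c_p * (3 / 2 * ρ₃ + β ^ 2 / ε) / κ)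
  refine ⟨N, lt_max_of_lt_right (by positivity), ε, hε, min_le_left _ _, ?_,
    (div_le_iff₀ hμ).1 (le_max_of_le_left (le_max_left _ _)),
    (div_le_iff₀ hγ).1 (le_max_of_le_left (le_max_right _ _)),
    (div_le_iff₀ hκ).1 (le_max_right _ _)⟩
  calc ε * c_p ≤ b / (4 * c_p) * c_p := by gcongr; exact min_le_right _ _
    _ = b / 4 := by field_simp

section ShearBeam

variable (N ρ α lm μ ρ₁ K γ b ρ₃ δ κ β : ℝ) (u φ ψ w : ℝ → ℝ → ℝ)

def energyDensity (x t : ℝ) : ℝ :=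
  ρ * (pdt u x t)^2 + α * (pdx u x t)^2 + lm * (φ x t - u x t)^2
    + ρ₁ * (pdt φ x t)^2 + K * (pdx φ x t + ψ x t)^2 + b * (pdx ψ x t)^2
    + ρ₃ * (pdt w x t)^2 + δ * (pdx w x t)^2

def lyapunovDensity (x t : ℝ) : ℝ :=
  N * (1/2 * energyDensity ρ α lm ρ₁ K b ρ₃ δ u φ ψ w x t)
    + ((ρ * pdt u x t * u x t + μ / 2 * (u x t)^2)
      + (ρ₁ * pdt φ x t * φ x t + γ / 2 * (φ x t)^2))
    + (ρ₃ * (pdt w x t * w x t) + κ / 2 * (pdx w x t)^2 + β * (pdx φ x t * w x t))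

-- Each summand is a stress times the multiplier `N f_t + f` of the corresponding equation.
def lyapunovFlux (x t : ℝ) : ℝ :=
  α * pdx u x t * (N * pdt u x t + u x t)
    + (K * (pdx φ x t + ψ x t) - β * pdt w x t) * (N * pdt φ x t + φ x t)
    + b * pdx ψ x t * (N * pdt ψ x t + ψ x t)
    + (δ * pdx w x t + κ * pdx (pdt w) x t) * (N * pdt w x t + w x t)

def lyapunovRate (x t : ℝ) : ℝ :=
  (ρ - N * μ) * (pdt u x t)^2 + (ρ₁ - N * γ) * (pdt φ x t)^2 + ρ₃ * (pdt w x t)^2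
    - N * κ * (pdx (pdt w) x t)^2 - α * (pdx u x t)^2 - lm * (φ x t - u x t)^2
    - K * (pdx φ x t + ψ x t)^2 - b * (pdx ψ x t)^2 - δ * (pdx w x t)^2
    + 2 * β * (pdx φ x t * pdt w x t)

variable {N ρ α lm μ ρ₁ K γ b ρ₃ δ κ β : ℝ} {u φ ψ w : ℝ → ℝ → ℝ}

theorem contDiff_lyapunovDensity {n : WithTop ℕ∞}
    (hu : ContDiff ℝ (n + 1) (fun p : ℝ × ℝ => u p.1 p.2))
    (hφ : ContDiff ℝ (n + 1) (fun p : ℝ × ℝ => φ p.1 p.2))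
    (hψ : ContDiff ℝ (n + 1) (fun p : ℝ × ℝ => ψ p.1 p.2))
    (hw : ContDiff ℝ (n + 1) (fun p : ℝ × ℝ => w p.1 p.2)) :
    ContDiff ℝ n (fun p : ℝ × ℝ =>
      lyapunovDensity N ρ α lm μ ρ₁ K γ b ρ₃ δ κ β u φ ψ w p.1 p.2) := by
  have hut := contDiff_pdt hu le_rfl
  have hφt := contDiff_pdt hφ le_rfl
  have hwt := contDiff_pdt hw le_rfl
  have hux := contDiff_pdx hu le_rfl
  have hφx := contDiff_pdx hφ le_rfl
  have hψx := contDiff_pdx hψ le_rfl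
  have hwx := contDiff_pdx hw le_rfl
  replace hu := hu.of_le le_self_add
  replace hφ := hφ.of_le le_self_add
  replace hψ := hψ.of_le le_self_add
  replace hw := hw.of_le le_self_add
  unfold lyapunovDensity energyDensity
  fun_prop

theorem hasDerivAt_lyapunov (L : ℝ) (hu : ContDiff ℝ 2 (fun p : ℝ × ℝ => u p.1 p.2))
    (hφ : ContDiff ℝ 2 (fun p : ℝ × ℝ => φ p.1 p.2))
    (hψ : ContDiff ℝ 2 (fun p : ℝ × ℝ => ψ p.1 p.2))
    (hw : ContDiff ℝ 2 (fun p : ℝ × ℝ => w p.1 p.2)) (t : ℝ) :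
    HasDerivAt (fun s => N * energy L ρ α lm ρ₁ K b ρ₃ δ u φ ψ w s + I1 L ρ μ ρ₁ γ u φ s
        + I2 L ρ₃ κ β φ w s)
      (∫ x in (0:ℝ)..L, pdt (lyapunovDensity N ρ α lm μ ρ₁ K γ b ρ₃ δ κ β u φ ψ w) x t) t := by
  have hut := contDiff_pdt (m := 1) hu (by norm_num)
  have hφt := contDiff_pdt (m := 1) hφ (by norm_num)
  have hwt := contDiff_pdt (m := 1) hw (by norm_num)
  have hux := contDiff_pdx (m := 1) hu (by norm_num)
  have hφx := contDiff_pdx (m := 1) hφ (by norm_num)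
  have hψx := contDiff_pdx (m := 1) hψ (by norm_num)
  have hwx := contDiff_pdx (m := 1) hw (by norm_num)
  have hL : (fun s => N * energy L ρ α lm ρ₁ K b ρ₃ δ u φ ψ w s + I1 L ρ μ ρ₁ γ u φ s
      + I2 L ρ₃ κ β φ w s)
      = fun s => ∫ x in (0:ℝ)..L, lyapunovDensity N ρ α lm μ ρ₁ K γ b ρ₃ δ κ β u φ ψ w x s := by
    funext s
    simp only [energy, I1, I2, lyapunovDensity, energyDensity,
      ← intervalIntegral.integral_const_mul]
    rw [← intervalIntegral.integral_add, ← intervalIntegral.integral_add,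
      ← intervalIntegral.integral_add, ← intervalIntegral.integral_add,
      ← intervalIntegral.integral_add]
    all_goals exact Continuous.intervalIntegrable (by fun_prop) _ _
  rw [hL]
  exact hasDerivAt_integral_pdt (contDiff_lyapunovDensity hu hφ hψ hw) 0 L t

theorem lyapunovFlux_eq_zero_of_forall {x t : ℝ} (ht : 0 < t)
    (hx : ∀ s, 0 ≤ s → u x s = 0 ∧ φ x s = 0 ∧ ψ x s = 0 ∧ w x s = 0) :
    lyapunovFlux N α K b δ κ β u φ ψ w x t = 0 := by
  obtain ⟨hu, hφ, hψ, hw⟩ := hx t ht.le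
  simp [lyapunovFlux, hu, hφ, hψ, hw, pdt_eq_zero_of_forall ht fun s hs => (hx s hs).1,
    pdt_eq_zero_of_forall ht fun s hs => (hx s hs).2.1,
    pdt_eq_zero_of_forall ht fun s hs => (hx s hs).2.2.1,
    pdt_eq_zero_of_forall ht fun s hs => (hx s hs).2.2.2]

theorem hasDerivAt_lyapunovFlux {L : ℝ} (S : IsShearSolution L ρ α lm μ ρ₁ K γ b ρ₃ δ κ β u φ ψ w)
    {y t : ℝ} (hy : y ∈ Ioo 0 L) (ht : 0 < t) :
    HasDerivAt (fun x => lyapunovFlux N α K b δ κ β u φ ψ w x t)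
      (pdt (lyapunovDensity N ρ α lm μ ρ₁ K γ b ρ₃ δ κ β u φ ψ w) y t
        - lyapunovRate N ρ α lm μ ρ₁ K γ b ρ₃ δ κ β u φ ψ w y t) y := by
  have h32 : (2 : WithTop ℕ∞) ≤ 3 := by norm_num
  obtain ⟨Tu, Tut, Tux, Xu, Xut, Xux⟩ := hasDerivAt_partials (S.smooth_u.of_le h32) y t
  obtain ⟨Tφ, Tφt, Tφx, Xφ, Xφt, Xφx⟩ := hasDerivAt_partials (S.smooth_phi.of_le h32) y t
  obtain ⟨Tψ, -, Tψx, Xψ, Xψt, Xψx⟩ := hasDerivAt_partials (S.smooth_psi.of_le h32) y t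
  obtain ⟨Tw, Twt, Twx, Xw, Xwt, Xwx⟩ := hasDerivAt_partials (S.smooth_w.of_le h32) y t
  obtain ⟨-, -, -, -, -, Xwtx⟩ := hasDerivAt_partials (contDiff_pdt S.smooth_w le_rfl) y t
  have hE : HasDerivAt (fun s => energyDensity ρ α lm ρ₁ K b ρ₃ δ u φ ψ w y s) _ t :=
    ((((((((Tut.fun_pow 2).const_mul ρ).fun_add ((Tux.fun_pow 2).const_mul α)).fun_add
      (((Tφ.fun_sub Tu).fun_pow 2).const_mul lm)).fun_add ((Tφt.fun_pow 2).const_mul ρ₁)).fun_add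
      (((Tφx.fun_add Tψ).fun_pow 2).const_mul K)).fun_add ((Tψx.fun_pow 2).const_mul b)).fun_add
      ((Twt.fun_pow 2).const_mul ρ₃)).fun_add ((Twx.fun_pow 2).const_mul δ)
  have hΦ : HasDerivAt (fun s => lyapunovDensity N ρ α lm μ ρ₁ K γ b ρ₃ δ κ β u φ ψ w y s) _ t :=
    (((hE.const_mul (1 / 2)).const_mul N).fun_add
      ((((Tut.const_mul ρ).fun_mul Tu).fun_add ((Tu.fun_pow 2).const_mul (μ / 2))).fun_add
        (((Tφt.const_mul ρ₁).fun_mul Tφ).fun_add ((Tφ.fun_pow 2).const_mul (γ / 2))))).fun_add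
      ((((Twt.fun_mul Tw).const_mul ρ₃).fun_add ((Twx.fun_pow 2).const_mul (κ / 2))).fun_add
        ((Tφx.fun_mul Tw).const_mul β))
  have hB : HasDerivAt (fun x => lyapunovFlux N α K b δ κ β u φ ψ w x t) _ y :=
    ((((Xux.const_mul α).fun_mul ((Xut.const_mul N).fun_add Xu)).fun_add
      ((((Xφx.fun_add Xψ).const_mul K).fun_sub (Xwt.const_mul β)).fun_mul
        ((Xφt.const_mul N).fun_add Xφ))).fun_add
      ((Xψx.const_mul b).fun_mul ((Xψt.const_mul N).fun_add Xψ))).fun_add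
      (((Xwx.const_mul δ).fun_add (Xwtx.const_mul κ)).fun_mul ((Xwt.const_mul N).fun_add Xw))
  have hsum : pdx (fun x s => pdx φ x s + ψ x s) y t = pdx (pdx φ) y t + pdx ψ y t :=
    (Xφx.fun_add Xψ).deriv
  have e1 := S.eq1 y hy t ht
  have e2 := S.eq2 y hy t ht
  have e3 := S.eq3 y hy t ht
  have e4 := S.eq4 y hy t ht
  rw [hsum] at e2
  convert hB using 1
  rw [pdt, hΦ.deriv, lyapunovRate]
  linear_combination (N * pdt u y t + u y t) * e1 + (N * pdt φ y t + φ y t) * e2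
    + (N * pdt ψ y t + ψ y t) * e3 + (N * pdt w y t + w y t) * e4

theorem integral_pdt_lyapunovDensity {L : ℝ}
    (S : IsShearSolution L ρ α lm μ ρ₁ K γ b ρ₃ δ κ β u φ ψ w) (hL : 0 ≤ L) {t : ℝ} (ht : 0 < t) :
    ∫ x in (0:ℝ)..L, pdt (lyapunovDensity N ρ α lm μ ρ₁ K γ b ρ₃ δ κ β u φ ψ w) x t
      = ∫ x in (0:ℝ)..L, lyapunovRate N ρ α lm μ ρ₁ K γ b ρ₃ δ κ β u φ ψ w x t := by
  have hu := S.smooth_u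
  have hφ := S.smooth_phi
  have hψ := S.smooth_psi
  have hw := S.smooth_w
  have hut := contDiff_pdt (m := 2) hu (by norm_num)
  have hφt := contDiff_pdt (m := 2) hφ (by norm_num)
  have hψt := contDiff_pdt (m := 2) hψ (by norm_num)
  have hwt := contDiff_pdt (m := 2) hw (by norm_num)
  have hux := contDiff_pdx (m := 2) hu (by norm_num)
  have hφx := contDiff_pdx (m := 2) hφ (by norm_num)
  have hψx := contDiff_pdx (m := 2) hψ (by norm_num)
  have hwx := contDiff_pdx (m := 2) hw (by norm_num)
  have hwtx := contDiff_pdx (m := 1) hwt (by norm_num)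
  have hΦt : Continuous fun p : ℝ × ℝ =>
      pdt (lyapunovDensity N ρ α lm μ ρ₁ K γ b ρ₃ δ κ β u φ ψ w) p.1 p.2 :=
    (contDiff_pdt (m := 0) (contDiff_lyapunovDensity (n := 1) (hu.of_le (by norm_num))
      (hφ.of_le (by norm_num)) (hψ.of_le (by norm_num)) (hw.of_le (by norm_num)))
      (by norm_num)).continuous
  refine integral_eq_integral_of_hasDerivAt_sub hL ?_ (fun y hy => hasDerivAt_lyapunovFlux S hy ht)
    (Continuous.intervalIntegrable (by fun_prop) _ _)
    (Continuous.intervalIntegrable (by unfold lyapunovRate; fun_prop) _ _) ?_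
  · exact Continuous.continuousOn (by unfold lyapunovFlux; fun_prop)
  · rw [lyapunovFlux_eq_zero_of_forall ht, lyapunovFlux_eq_zero_of_forall ht]
    · intro s hs
      obtain ⟨-, h1, -, h2, -, h3, -, h4⟩ := S.bc s hs
      exact ⟨h1, h2, h3, h4⟩
    · intro s hs
      obtain ⟨h1, -, h2, -, h3, -, h4, -⟩ := S.bc s hs
      exact ⟨h1, h2, h3, h4⟩

theorem lyapunovRate_add_half_energyDensity_le {c_p ε : ℝ} (hα : 0 ≤ α) (hlm : 0 ≤ lm)
    (hδ : 0 ≤ δ) (hε : 0 < ε) (hεK : ε ≤ K / 4) (hεb : ε * c_p ≤ b / 4)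
    (hNμ : 3 / 2 * ρ ≤ N * μ) (hNγ : 3 / 2 * ρ₁ ≤ N * γ)
    (hNκ : c_p * (3 / 2 * ρ₃ + β ^ 2 / ε) ≤ N * κ) (x t : ℝ) :
    lyapunovRate N ρ α lm μ ρ₁ K γ b ρ₃ δ κ β u φ ψ w x t
        + 1 / 2 * energyDensity ρ α lm ρ₁ K b ρ₃ δ u φ ψ w x t
      ≤ 2 * ε * ((ψ x t)^2 - c_p * (pdx ψ x t)^2)
        + (3 / 2 * ρ₃ + β ^ 2 / ε) * ((pdt w x t)^2 - c_p * (pdx (pdt w) x t)^2) := by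
  have young : 2 * β * (pdx φ x t * pdt w x t) ≤ ε * (pdx φ x t)^2 + β ^ 2 / ε * (pdt w x t)^2 := by
    have h : ε * (pdx φ x t)^2 + β ^ 2 / ε * (pdt w x t)^2 - 2 * β * (pdx φ x t * pdt w x t)
        = (ε * pdx φ x t - β * pdt w x t)^2 / ε := by
      field_simp
      ring
    linarith [div_nonneg (sq_nonneg (ε * pdx φ x t - β * pdt w x t)) hε.le]
  have split : (pdx φ x t)^2 ≤ 2 * (pdx φ x t + ψ x t)^2 + 2 * (ψ x t)^2 := by
    nlinarith [sq_nonneg (pdx φ x t + 2 * ψ x t)]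
  unfold lyapunovRate energyDensity
  linarith [mul_nonneg (sub_nonneg.2 hNμ) (sq_nonneg (pdt u x t)),
    mul_nonneg (sub_nonneg.2 hNγ) (sq_nonneg (pdt φ x t)),
    mul_nonneg (sub_nonneg.2 hNκ) (sq_nonneg (pdx (pdt w) x t)),
    mul_le_mul_of_nonneg_left split hε.le,
    mul_nonneg (sub_nonneg.2 hεK) (sq_nonneg (pdx φ x t + ψ x t)),
    mul_nonneg (sub_nonneg.2 hεb) (sq_nonneg (pdx ψ x t)),
    mul_nonneg hα (sq_nonneg (pdx u x t)), mul_nonneg hlm (sq_nonneg (φ x t - u x t)),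
    mul_nonneg hδ (sq_nonneg (pdx w x t))]

theorem integral_lyapunovRate_le {L c_p ε : ℝ}
    (S : IsShearSolution L ρ α lm μ ρ₁ K γ b ρ₃ δ κ β u φ ψ w) (hL : 0 ≤ L) {t : ℝ} (ht : 0 < t)
    (hα : 0 ≤ α) (hlm : 0 ≤ lm) (hρ₃ : 0 ≤ ρ₃) (hδ : 0 ≤ δ) (hε : 0 < ε) (hεK : ε ≤ K / 4)
    (hεb : ε * c_p ≤ b / 4) (hNμ : 3 / 2 * ρ ≤ N * μ) (hNγ : 3 / 2 * ρ₁ ≤ N * γ)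
    (hNκ : c_p * (3 / 2 * ρ₃ + β ^ 2 / ε) ≤ N * κ)
    (hpoin : ∀ f : ℝ → ℝ, ContDiff ℝ 1 f → f 0 = 0 → f L = 0 →
      (∫ x in (0:ℝ)..L, (f x)^2) ≤ c_p * ∫ x in (0:ℝ)..L, (deriv f x)^2) :
    ∫ x in (0:ℝ)..L, lyapunovRate N ρ α lm μ ρ₁ K γ b ρ₃ δ κ β u φ ψ w x t
      ≤ -energy L ρ α lm ρ₁ K b ρ₃ δ u φ ψ w t := by
  have hu := S.smooth_u
  have hφ := S.smooth_phi
  have hψ := S.smooth_psi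
  have hw := S.smooth_w
  have hut := contDiff_pdt (m := 2) hu (by norm_num)
  have hφt := contDiff_pdt (m := 2) hφ (by norm_num)
  have hwt := contDiff_pdt (m := 2) hw (by norm_num)
  have hux := contDiff_pdx (m := 2) hu (by norm_num)
  have hφx := contDiff_pdx (m := 2) hφ (by norm_num)
  have hψx := contDiff_pdx (m := 2) hψ (by norm_num)
  have hwx := contDiff_pdx (m := 2) hw (by norm_num)
  have hwtx := contDiff_pdx (m := 1) hwt (by norm_num)
  have hint : ∀ g : ℝ → ℝ, Continuous g → IntervalIntegrable g volume 0 L :=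
    fun g hg => hg.intervalIntegrable 0 L
  have hψP : ∫ x in (0:ℝ)..L, ((ψ x t)^2 - c_p * (pdx ψ x t)^2) ≤ 0 :=
    integral_sq_sub_mul_deriv_sq_nonpos hpoin
      ((hψ.comp (contDiff_id.prodMk contDiff_const)).of_le (by norm_num))
      (S.bc t ht.le).2.2.2.2.1 (S.bc t ht.le).2.2.2.2.2.1
  have hwP : ∫ x in (0:ℝ)..L, ((pdt w x t)^2 - c_p * (pdx (pdt w) x t)^2) ≤ 0 :=
    integral_sq_sub_mul_deriv_sq_nonpos hpoin
      ((hwt.comp (contDiff_id.prodMk contDiff_const)).of_le (by norm_num))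
      (pdt_eq_zero_of_forall ht fun s hs => (S.bc s hs).2.2.2.2.2.2.1)
      (pdt_eq_zero_of_forall ht fun s hs => (S.bc s hs).2.2.2.2.2.2.2)
  have hR : Continuous fun x => lyapunovRate N ρ α lm μ ρ₁ K γ b ρ₃ δ κ β u φ ψ w x t := by
    unfold lyapunovRate; fun_prop
  have he : Continuous fun x => energyDensity ρ α lm ρ₁ K b ρ₃ δ u φ ψ w x t := by
    unfold energyDensity; fun_prop
  have key := intervalIntegral.integral_mono_on hL (hint _ (by fun_prop)) (hint _ (by fun_prop))
    fun x _ => lyapunovRate_add_half_energyDensity_le (u := u) (φ := φ) (ψ := ψ) (w := w)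
      hα hlm hδ hε hεK hεb hNμ hNγ hNκ x t
  rw [intervalIntegral.integral_add, intervalIntegral.integral_add,
    intervalIntegral.integral_const_mul, intervalIntegral.integral_const_mul,
    intervalIntegral.integral_const_mul] at key
  · have hc : 0 ≤ 3 / 2 * ρ₃ + β ^ 2 / ε := by positivity
    change _ ≤ -(1 / 2 * ∫ x in (0:ℝ)..L, energyDensity ρ α lm ρ₁ K b ρ₃ δ u φ ψ w x t)
    linarith [mul_nonpos_of_nonneg_of_nonpos (by positivity : (0:ℝ) ≤ 2 * ε) hψP,
      mul_nonpos_of_nonneg_of_nonpos hc hwP]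
  all_goals exact hint _ (by fun_prop)

end ShearBeam

theorem lyapunov_derivative_estimate_general
    {L ρ α lm μ ρ₁ K γ b ρ₃ δ κ β c_p : ℝ}
    (hL : 0 < L) (hα : 0 < α) (hlm : 0 < lm) (hμ : 0 < μ)
    (hK : 0 < K) (hγ : 0 < γ) (hb : 0 < b) (hρ₃ : 0 < ρ₃)
    (hδ : 0 < δ) (hκ : 0 < κ) (hcp : 0 < c_p)
    (hpoin : ∀ f : ℝ → ℝ, ContDiff ℝ 1 f → f 0 = 0 → f L = 0 →
      (∫ x in (0:ℝ)..L, (f x)^2) ≤ c_p * ∫ x in (0:ℝ)..L, (deriv f x)^2) :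
    ∃ N : ℝ, 0 < N ∧ ∃ ζ₂ : ℝ, 0 < ζ₂ ∧
      ∀ u φ ψ w : ℝ → ℝ → ℝ,
        IsShearSolution L ρ α lm μ ρ₁ K γ b ρ₃ δ κ β u φ ψ w →
        ∀ t : ℝ, 0 < t →
          ∃ d : ℝ,
            HasDerivAt (fun s => N * energy L ρ α lm ρ₁ K b ρ₃ δ u φ ψ w s
              + I1 L ρ μ ρ₁ γ u φ s + I2 L ρ₃ κ β φ w s) d t ∧
            d ≤ -ζ₂ * energy L ρ α lm ρ₁ K b ρ₃ δ u φ ψ w t := by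
  obtain ⟨N, hN, ε, hε, hεK, hεb, hNμ, hNγ, hNκ⟩ :=
    exists_lyapunov_constants (ρ := ρ) (ρ₁ := ρ₁) (β := β) hμ hγ hK hb hρ₃ hκ hcp
  have h23 : (2 : WithTop ℕ∞) ≤ 3 := by norm_num
  refine ⟨N, hN, 1, one_pos, fun u φ ψ w S t ht =>
    ⟨_, hasDerivAt_lyapunov L (S.smooth_u.of_le h23) (S.smooth_phi.of_le h23)
      (S.smooth_psi.of_le h23) (S.smooth_w.of_le h23) t, ?_⟩⟩
  rw [integral_pdt_lyapunovDensity S hL.le ht, neg_one_mul]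
  exact integral_lyapunovRate_le S hL.le ht hα.le hlm.le hρ₃.le hδ.le hε hεK hεb hNμ hNγ hNκ hpoin

/-- the Lyapunov functional decays at rate proportional to the energy. -/
theorem lyapunov_derivative_estimate
    {L ρ α lm μ ρ₁ K γ b ρ₃ δ κ β c_p : ℝ}
    (hL : 0 < L) (hρ : 0 < ρ) (hα : 0 < α) (hlm : 0 < lm) (hμ : 0 < μ)
    (hρ₁ : 0 < ρ₁) (hK : 0 < K) (hγ : 0 < γ) (hb : 0 < b) (hρ₃ : 0 < ρ₃)
    (hδ : 0 < δ) (hκ : 0 < κ) (hβ : β ≠ 0) (hcp : 0 < c_p)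
    (hpoin : ∀ f : ℝ → ℝ, ContDiff ℝ 1 f → f 0 = 0 → f L = 0 →
      (∫ x in (0:ℝ)..L, (f x)^2) ≤ c_p * ∫ x in (0:ℝ)..L, (deriv f x)^2) :
    ∃ N : ℝ, 0 < N ∧ ∃ ζ₂ : ℝ, 0 < ζ₂ ∧
      ∀ u φ ψ w : ℝ → ℝ → ℝ,
        IsShearSolution L ρ α lm μ ρ₁ K γ b ρ₃ δ κ β u φ ψ w →
        ∀ t : ℝ, 0 < t →
          ∃ d : ℝ,
            HasDerivAt (fun s => N * energy L ρ α lm ρ₁ K b ρ₃ δ u φ ψ w s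
              + I1 L ρ μ ρ₁ γ u φ s + I2 L ρ₃ κ β φ w s) d t ∧
            d ≤ -ζ₂ * energy L ρ α lm ρ₁ K b ρ₃ δ u φ ψ w t :=
  lyapunov_derivative_estimate_general hL hα hlm hμ hK hγ hb hρ₃ hδ hκ hcp hpoin
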